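/- arXiv:1803.00808 — 5 statements merged into one kernel-verified Lean document; each statement's English description precedes it below -/
import Mathlib

section
/- Define β_{k,n} = C(k, n-1) ρ^{k-n+1} for fixed n ≥ 1 and ρ ∈ (0,1). Then the maximum of β_{k,n} over integers k ≥ n-1 is attained at k = ⌊(n-1)/(1-ρ)⌋. -/
lemma beta_cast (m j : ℕ) (hj : m ≤ j) : ((j + 1 - m : ℕ) : ℝ) = (j : ℝ) + 1 - m := by
  have : m ≤ j + 1 := by omega
  push_cast [Nat.cast_sub this]
  ring

lemma beta_id (m j : ℕ) (hj : m ≤ j) :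
    ((j.choose m : ℝ)) * ((j : ℝ) + 1) = (((j + 1).choose m : ℝ)) * ((j : ℝ) + 1 - m) := by
  have h := Nat.choose_mul_succ_eq j m
  have h' : ((j.choose m * (j + 1) : ℕ) : ℝ) = (((j + 1).choose m * (j + 1 - m) : ℕ) : ℝ) := by
    exact_mod_cast congrArg (Nat.cast : ℕ → ℝ) h
  push_cast at h'
  rw [beta_cast m j hj] at h'
  push_cast
  linarith

lemma beta_pow (m j : ℕ) (hj : m ≤ j) (ρ : ℝ) : ρ ^ (j + 1 - m) = ρ ^ (j - m) * ρ := by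
  rw [← pow_succ]
  congr 1
  omega

lemma step_le (ρ : ℝ) (hρ : 0 < ρ) (m j : ℕ) (hj : m ≤ j)
    (h : ((j : ℝ) + 1) * ρ ≤ (j : ℝ) + 1 - m) :
    ((j + 1).choose m : ℝ) * ρ ^ (j + 1 - m) ≤ (j.choose m : ℝ) * ρ ^ (j - m) := by
  have hid := beta_id m j hj
  have hpos : (0 : ℝ) < (j : ℝ) + 1 - m := by
    have : (m : ℝ) ≤ j := by exact_mod_cast hj
    linarith
  have hC : (0 : ℝ) ≤ (j.choose m : ℝ) := by positivity
  have hP : (0 : ℝ) ≤ ρ ^ (j - m) := by positivity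
  rw [beta_pow m j hj]
  refine le_of_mul_le_mul_right ?_ hpos
  calc ((j + 1).choose m : ℝ) * (ρ ^ (j - m) * ρ) * ((j : ℝ) + 1 - m)
      = (j.choose m : ℝ) * ρ ^ (j - m) * (((j : ℝ) + 1) * ρ) := by
        linear_combination (-(ρ ^ (j - m) * ρ)) * hid
    _ ≤ (j.choose m : ℝ) * ρ ^ (j - m) * ((j : ℝ) + 1 - m) :=
        mul_le_mul_of_nonneg_left h (mul_nonneg hC hP)

lemma step_ge (ρ : ℝ) (hρ : 0 < ρ) (m j : ℕ) (hj : m ≤ j)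
    (h : (j : ℝ) + 1 - m ≤ ((j : ℝ) + 1) * ρ) :
    (j.choose m : ℝ) * ρ ^ (j - m) ≤ ((j + 1).choose m : ℝ) * ρ ^ (j + 1 - m) := by
  have hid := beta_id m j hj
  have hpos : (0 : ℝ) < (j : ℝ) + 1 - m := by
    have : (m : ℝ) ≤ j := by exact_mod_cast hj
    linarith
  have hC : (0 : ℝ) ≤ ((j + 1).choose m : ℝ) := by positivity
  have hP : (0 : ℝ) ≤ ρ ^ (j - m) := by positivity
  rw [beta_pow m j hj]
  nlinarith [mul_le_mul_of_nonneg_left h (mul_nonneg hC hP)]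

/-- The maximum of β_{k,n} = C(k,n-1) ρ^{k-n+1} over k ≥ n-1 is attained at
    K = ⌊(n-1)/(1-ρ)⌋. -/
theorem stmt3 (n : ℕ) (hn : 1 ≤ n) (ρ : ℝ) (hρ0 : 0 < ρ) (hρ1 : ρ < 1) :
    ∀ k : ℕ, n - 1 ≤ k →
      ((Nat.floor (((n : ℝ) - 1) / (1 - ρ))).choose (n - 1) : ℝ)
          * ρ ^ (Nat.floor (((n : ℝ) - 1) / (1 - ρ)) + 1 - n)
        ≥ (k.choose (n - 1) : ℝ) * ρ ^ (k + 1 - n) := by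
  intro k hk
  set m := n - 1 with hm
  have hρ' : (0 : ℝ) < 1 - ρ := by linarith
  have hcast : ((n : ℝ) - 1) = (m : ℝ) := by
    rw [hm]; push_cast [Nat.cast_sub hn]; ring
  rw [hcast]
  set K := Nat.floor ((m : ℝ) / (1 - ρ)) with hK
  have hmK : m ≤ K := by
    apply Nat.le_floor
    rw [le_div_iff₀ hρ']
    nlinarith [Nat.cast_nonneg (α := ℝ) m]
  have hexp1 : K + 1 - n = K - m := by omega
  have hexp2 : k + 1 - n = k - m := by omega
  rw [hexp1, hexp2]
  set β : ℕ → ℝ := fun j => (j.choose m : ℝ) * ρ ^ (j - m) with hβ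
  show β k ≤ β K
  -- floor bounds
  have hfl : (K : ℝ) ≤ (m : ℝ) / (1 - ρ) := Nat.floor_le (by positivity)
  have hfu : (m : ℝ) / (1 - ρ) < (K : ℝ) + 1 := Nat.lt_floor_add_one _
  have hdecr : ∀ j, K ≤ j → β (j + 1) ≤ β j := by
    intro j hj
    apply step_le ρ hρ0 m j (le_trans hmK hj)
    have hjK : (K : ℝ) ≤ (j : ℝ) := by exact_mod_cast hj
    have h1 : (m : ℝ) < ((K : ℝ) + 1) * (1 - ρ) := by
      rw [div_lt_iff₀ hρ'] at hfu; linarith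
    nlinarith
  have hincr : ∀ j, m ≤ j → j + 1 ≤ K → β j ≤ β (j + 1) := by
    intro j hjm hjK
    apply step_ge ρ hρ0 m j hjm
    have hjK' : ((j : ℝ) + 1) ≤ (K : ℝ) := by exact_mod_cast hjK
    have h1 : ((j : ℝ) + 1) * (1 - ρ) ≤ (m : ℝ) := by
      have := le_trans hjK' hfl
      rw [le_div_iff₀ hρ'] at this
      nlinarith
    nlinarith
  rcases le_or_gt k K with hkK | hKk
  · -- k ≤ K : use increasing part
    have key : ∀ d, m ≤ K - d → β (K - d) ≤ β K := by
      intro d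
      induction d with
      | zero => simp
      | succ d ih =>
        intro hmd
        rcases le_or_gt K d with hKd | hdK
        · have : K - (d + 1) = K - d := by omega
          rw [this]
          exact ih (by omega)
        · have h1 : K - (d + 1) + 1 = K - d := by omega
          have h2 : β (K - (d + 1)) ≤ β (K - (d + 1) + 1) := by
            apply hincr _ hmd
            omega
          rw [h1] at h2
          exact le_trans h2 (ih (by omega))
    have := key (K - k) (by omega)
    rwa [show K - (K - k) = k by omega] at this
  · -- K ≤ k : use decreasing part
    have key : ∀ j, K ≤ j → β j ≤ β K := by
      intro j hj
      induction j, hj using Nat.le_induction with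
      | base => exact le_refl _
      | succ j hj ih => exact le_trans (hdecr j hj) ih
    exact key k (le_of_lt hKk)
end

section
/- For the sequence β_{k,n} = C(k, n-1) ρ^{k-n+1} (the solution of the equal-roots difference equation with initial conditions (0,…,0,1)), there exists k ≥ n with β_{k,n} > 1 if and only if ρ > 1/n. -/
lemma choose_le_pow_aux (j : ℕ) : ∀ k, j + 1 ≤ k → k.choose (j+1) ≤ (j+2)^(k-(j+1)) := by
  intro k
  induction k with
  | zero => intro h; omega
  | succ k ih =>
    intro h
    rcases Nat.eq_or_lt_of_le h with heq | hlt
    · rw [← heq]; simp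
    · have hk : j + 1 ≤ k := Nat.lt_succ_iff.mp hlt
      have hsplit : (k+1).choose (j+1) = k.choose j + k.choose (j+1) :=
        Nat.succ_sub_one (j+1) ▸ Nat.choose_succ_succ k j
      have hid : k.choose (j+1) * (j+1) = k.choose j * (k - j) :=
        Nat.choose_succ_right_eq k j
      have h1 : k.choose j ≤ k.choose (j+1) * (j+1) := by
        rw [hid]
        have : 1 ≤ k - j := by omega
        calc k.choose j = k.choose j * 1 := by ring
          _ ≤ k.choose j * (k - j) := Nat.mul_le_mul_left _ this
      have h2 : (k+1).choose (j+1) ≤ k.choose (j+1) * (j+2) := by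
        calc (k+1).choose (j+1) = k.choose j + k.choose (j+1) := hsplit
          _ ≤ k.choose (j+1) * (j+1) + k.choose (j+1) := by omega
          _ = k.choose (j+1) * (j+2) := by ring
      have h3 := ih hk
      have hexp : k + 1 - (j+1) = (k - (j+1)) + 1 := by omega
      calc (k+1).choose (j+1) ≤ k.choose (j+1) * (j+2) := h2
        _ ≤ (j+2)^(k-(j+1)) * (j+2) := Nat.mul_le_mul_right _ h3
        _ = (j+2)^(k+1-(j+1)) := by rw [hexp, pow_succ]

/-- Existence of peak for β_{k,n} = C(k,n-1) ρ^{k-n+1} iff ρ > 1/n. -/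
theorem stmt4 (n : ℕ) (hn : 2 ≤ n) (ρ : ℝ) (hρ0 : 0 < ρ) (hρ1 : ρ < 1) :
    (∃ k : ℕ, n ≤ k ∧ (k.choose (n - 1) : ℝ) * ρ ^ (k + 1 - n) > 1) ↔ ρ > 1 / (n : ℝ) := by
  have hn0 : (0:ℝ) < n := by positivity
  constructor
  · rintro ⟨k, hk, hgt⟩
    by_contra hρ
    push_neg at hρ
    have hnρ : (n:ℝ) * ρ ≤ 1 := by
      rw [le_div_iff₀ hn0] at hρ
      linarith
    -- choose bound
    obtain ⟨j, hj⟩ : ∃ j, n = j + 2 := ⟨n - 2, by omega⟩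
    subst hj
    have hb : k.choose (j+1) ≤ (j+2)^(k-(j+1)) := choose_le_pow_aux j k (by omega)
    have hexp : k - (j+1) = k + 1 - (j+2) := by omega
    have hb' : (k.choose ((j+2) - 1) : ℝ) ≤ ((j+2:ℕ):ℝ)^(k+1-(j+2)) := by
      have : (j+2) - 1 = j + 1 := by omega
      rw [this, ← hexp]
      exact_mod_cast hb
    have hle : (k.choose ((j+2) - 1) : ℝ) * ρ ^ (k + 1 - (j+2)) ≤ 1 := by
      calc (k.choose ((j+2) - 1) : ℝ) * ρ ^ (k + 1 - (j+2))
          ≤ ((j+2:ℕ):ℝ)^(k+1-(j+2)) * ρ ^ (k + 1 - (j+2)) := by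
            apply mul_le_mul_of_nonneg_right hb' (by positivity)
        _ = (((j+2:ℕ):ℝ) * ρ) ^ (k+1-(j+2)) := by rw [mul_pow]
        _ ≤ 1 ^ (k+1-(j+2)) := by
            apply pow_le_pow_left₀ (by positivity) _ _
            exact hnρ
        _ = 1 := one_pow _
    linarith
  · intro hρ
    refine ⟨n, le_refl n, ?_⟩
    have h1 : n.choose (n-1) = n := by
      have := Nat.choose_symm (show 1 ≤ n by omega)
      simpa [Nat.choose_one_right] using this
    have h2 : n + 1 - n = 1 := by omega
    rw [h1, h2, pow_one]
    rw [gt_iff_lt, div_lt_iff₀ hn0] at hρ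
    nlinarith
end

section
/- Let (x_k) satisfy the n-th order equal-roots difference equation with ρ ∈ (0,1). For k ≥ n define α_{k,n} = Σ_{i=0}^{n-1} |P_i(k)| ρ^{k-i}. Then for all initial conditions with ‖x^{(0)}‖_∞ ≤ 1 and all k ≥ n, x_k ≤ α_{k,n}, and equality for each k is attained with initial conditions x_i = (-1)^{n-1-i}, i = 0,…,n-1. -/
/-!
Writing `x k = ρ ^ k * y k`, the equation says that the `n`-th forward difference of `y`
vanishes, so `y` agrees with the polynomial of degree `< n` interpolating `x i / ρ ^ i` at
`0, …, n - 1`. This gives `x k = ∑ i, x i * P_i(k) * ρ ^ (k - i)`. For `k ≥ n` every factor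
`(k - j) / (i - j)` of `P_i(k)` has the sign of `i - j`, so `P_i(k)` has sign
`(-1) ^ (n - 1 - i)`: the bound holds termwise and is attained at `x i = (-1) ^ (n - 1 - i)`.
-/

open Polynomial Finset

/-- Lagrange basis polynomial at nodes 0,1,…,n-1, evaluated at a natural number k. -/
noncomputable def lagrangeP (n i : ℕ) (k : ℕ) : ℝ :=
  ∏ j ∈ (Finset.range n).erase i, ((k : ℝ) - (j : ℝ)) / ((i : ℝ) - (j : ℝ))

section Recurrence

variable {R : Type*} [CommRing R]

def SatisfiesRecurrence (n : ℕ) (c : ℕ → R) (x : ℕ → R) : Prop :=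
  ∀ k, ∑ j ∈ range (n + 1), c j * x (k + n - j) = 0

/-- The coefficients of `(X - ρ) ^ n`, read from the leading one down. -/
def equalRootsCoeff (n : ℕ) (ρ : R) (j : ℕ) : R :=
  (-1) ^ j * n.choose j * ρ ^ j

theorem SatisfiesRecurrence.eq_of_forall_lt {n : ℕ} {c : ℕ → R} (hc : c 0 = 1)
    {x y : ℕ → R} (hx : SatisfiesRecurrence n c x) (hy : SatisfiesRecurrence n c y)
    (h : ∀ i < n, x i = y i) : x = y := by
  funext k
  induction k using Nat.strong_induction_on with
  | _ k ih =>
    obtain hk | hk := lt_or_ge k n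
    · exact h k hk
    obtain ⟨m, rfl⟩ := Nat.exists_eq_add_of_le' hk
    have hxm := hx m
    have hym := hy m
    rw [sum_range_succ', hc, one_mul, Nat.sub_zero] at hxm hym
    have hlower : ∑ j ∈ range n, c (j + 1) * x (m + n - (j + 1)) =
        ∑ j ∈ range n, c (j + 1) * y (m + n - (j + 1)) :=
      sum_congr rfl fun j hj => by rw [ih _ (by have := mem_range.1 hj; omega)]
    linear_combination hxm - hym - hlower

theorem sum_choose_mul_eval_eq_zero {n : ℕ} {P : R[X]} (hP : P.degree < n) (k : ℕ) :
    ∑ j ∈ range (n + 1), (-1) ^ j * n.choose j * P.eval ((k + n - j : ℕ) : R) = 0 := by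
  have hΔ : (fwdDiff 1)^[n] P.eval = 0 := by
    by_cases hP0 : P = 0
    · subst hP0
      simp only [eval_zero]
      exact Function.iterate_fixed (fwdDiff_const (1 : R) (0 : R)) n
    · exact fwdDiff_iter_eq_zero_of_degree_lt ((natDegree_lt_iff_degree_lt hP0).2 hP)
  -- the forward-difference expansion, summed in reverse order
  have := congr_fun hΔ k
  rw [fwdDiff_iter_eq_sum_shift, ← sum_range_reflect, Pi.zero_apply] at this
  rw [← this]
  refine sum_congr rfl fun j hj => ?_
  have hjn : j ≤ n := Nat.lt_succ_iff.1 (mem_range.1 hj)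
  rw [Nat.add_sub_cancel, Nat.sub_sub_self hjn, Nat.choose_symm hjn, zsmul_eq_mul, nsmul_one]
  push_cast [hjn, Nat.add_sub_assoc hjn]
  ring

theorem satisfiesRecurrence_pow_mul_eval {n : ℕ} (ρ : R) {P : R[X]} (hP : P.degree < n) :
    SatisfiesRecurrence n (equalRootsCoeff n ρ) (fun k => ρ ^ k * P.eval (k : R)) := by
  intro k
  calc ∑ j ∈ range (n + 1),
        equalRootsCoeff n ρ j * (ρ ^ (k + n - j) * P.eval ((k + n - j : ℕ) : R))
      = ρ ^ (k + n) *
          ∑ j ∈ range (n + 1), (-1) ^ j * n.choose j * P.eval ((k + n - j : ℕ) : R) := by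
        rw [mul_sum]
        refine sum_congr rfl fun j hj => ?_
        have hjn : j ≤ k + n := by have := mem_range.1 hj; omega
        rw [equalRootsCoeff, ← Nat.add_sub_cancel' hjn, pow_add, Nat.add_sub_cancel_left]
        ring
    _ = 0 := by rw [sum_choose_mul_eval_eq_zero hP, mul_zero]

end Recurrence

theorem eval_basis_range_natCast (n i k : ℕ) :
    (Lagrange.basis (range n) (fun j : ℕ => (j : ℝ)) i).eval (k : ℝ) = lagrangeP n i k := by
  rw [Lagrange.basis, eval_prod, lagrangeP]
  refine prod_congr rfl fun j _ => ?_
  simp [Lagrange.basisDivisor, div_eq_mul_inv, mul_comm]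

theorem SatisfiesRecurrence.eq_sum_lagrangeP {n : ℕ} {ρ : ℝ} (hρ : ρ ≠ 0) {x : ℕ → ℝ}
    (hx : SatisfiesRecurrence n (equalRootsCoeff n ρ) x) {k : ℕ} (hk : n ≤ k) :
    x k = ∑ i ∈ range n, x i * lagrangeP n i k * ρ ^ (k - i) := by
  have hinj : Set.InjOn (fun i : ℕ => (i : ℝ)) (range n) := Nat.cast_injective.injOn
  set P := Lagrange.interpolate (range n) (fun i : ℕ => (i : ℝ)) (fun i => x i / ρ ^ i)
    with hPdef
  have hP : P.degree < n := card_range n ▸ Lagrange.degree_interpolate_lt _ hinj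
  have hxP : x = fun k : ℕ => ρ ^ k * P.eval (k : ℝ) :=
    hx.eq_of_forall_lt (by simp [equalRootsCoeff]) (satisfiesRecurrence_pow_mul_eval ρ hP)
      fun i hi => by
        rw [Lagrange.eval_interpolate_at_node _ hinj (mem_range.2 hi)]
        field_simp
  rw [congr_fun hxP k, hPdef, Lagrange.interpolate_apply, eval_finsetSum, mul_sum]
  refine sum_congr rfl fun i hi => ?_
  have hik : i ≤ k := (mem_range.1 hi).le.trans hk
  rw [eval_mul, eval_C, eval_basis_range_natCast, pow_sub₀ ρ hρ hik]
  ring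

theorem abs_lagrangeP {n i k : ℕ} (hi : i < n) (hk : n ≤ k) :
    |lagrangeP n i k| = (-1) ^ (n - 1 - i) * lagrangeP n i k := by
  have hsign :
      ∏ j ∈ (range n).erase i, (if i < j then (-1 : ℝ) else 1) = (-1) ^ (n - 1 - i) := by
    rw [prod_ite, prod_const, prod_const, one_pow, mul_one]
    congr 1
    rw [show ((range n).erase i).filter (i < ·) = Ioo i n by ext j; simp; omega, Nat.card_Ioo]
    omega
  rw [lagrangeP, abs_prod, ← hsign, ← prod_mul_distrib]
  refine prod_congr rfl fun j hj => ?_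
  obtain ⟨hji, hjn⟩ : j ≠ i ∧ j < n := by simpa using hj
  have hkj : (0 : ℝ) < k - j := sub_pos.2 (by exact_mod_cast hjn.trans_le hk)
  rw [abs_div, abs_of_pos hkj]
  split_ifs with hij
  · rw [abs_of_neg (sub_neg.2 (by exact_mod_cast hij)), div_neg, neg_one_mul]
  · rw [abs_of_pos (sub_pos.2 (by exact_mod_cast (by omega : j < i))), one_mul]

theorem stmt7_general (n : ℕ) (ρ : ℝ) (hρ0 : 0 < ρ) :
    (∀ x : ℕ → ℝ,
      (∀ k : ℕ,
        ∑ j ∈ Finset.range (n + 1), (-1 : ℝ) ^ j * (n.choose j) * ρ ^ j * x (k + n - j) = 0) →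
      (∀ i : ℕ, i < n → |x i| ≤ 1) →
      ∀ k : ℕ, n ≤ k → x k ≤ ∑ i ∈ Finset.range n, |lagrangeP n i k| * ρ ^ (k - i)) ∧
    (∀ x : ℕ → ℝ,
      (∀ k : ℕ,
        ∑ j ∈ Finset.range (n + 1), (-1 : ℝ) ^ j * (n.choose j) * ρ ^ j * x (k + n - j) = 0) →
      (∀ i : ℕ, i < n → x i = (-1 : ℝ) ^ (n - 1 - i)) →
      ∀ k : ℕ, n ≤ k → x k = ∑ i ∈ Finset.range n, |lagrangeP n i k| * ρ ^ (k - i)) := by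
  refine ⟨fun x hx hbox k hk => ?_, fun x hx hinit k hk => ?_⟩
  · rw [SatisfiesRecurrence.eq_sum_lagrangeP hρ0.ne' hx hk]
    refine sum_le_sum fun i hi => mul_le_mul_of_nonneg_right ?_ (pow_nonneg hρ0.le _)
    calc x i * lagrangeP n i k
        ≤ |x i| * |lagrangeP n i k| := abs_mul (x i) _ ▸ le_abs_self _
      _ ≤ |lagrangeP n i k| := mul_le_of_le_one_left (abs_nonneg _) (hbox i (mem_range.1 hi))
  · rw [SatisfiesRecurrence.eq_sum_lagrangeP hρ0.ne' hx hk]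
    refine sum_congr rfl fun i hi => ?_
    rw [hinit i (mem_range.1 hi), abs_lagrangeP (mem_range.1 hi) hk]

/-- Upper bound α_{k,n} on solutions of the equal-roots equation over the unit box
    of initial conditions, attained with x_i = (-1)^{n-1-i}. -/
theorem stmt7 (n : ℕ) (hn : 1 ≤ n) (ρ : ℝ) (hρ0 : 0 < ρ) (hρ1 : ρ < 1) :
    (∀ x : ℕ → ℝ,
      (∀ k : ℕ,
        ∑ j ∈ Finset.range (n + 1), (-1 : ℝ) ^ j * (n.choose j) * ρ ^ j * x (k + n - j) = 0) →
      (∀ i : ℕ, i < n → |x i| ≤ 1) →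
      ∀ k : ℕ, n ≤ k → x k ≤ ∑ i ∈ Finset.range n, |lagrangeP n i k| * ρ ^ (k - i)) ∧
    (∀ x : ℕ → ℝ,
      (∀ k : ℕ,
        ∑ j ∈ Finset.range (n + 1), (-1 : ℝ) ^ j * (n.choose j) * ρ ^ j * x (k + n - j) = 0) →
      (∀ i : ℕ, i < n → x i = (-1 : ℝ) ^ (n - 1 - i)) →
      ∀ k : ℕ, n ≤ k → x k = ∑ i ∈ Finset.range n, |lagrangeP n i k| * ρ ^ (k - i)) :=
  stmt7_general n ρ hρ0
end

section
/- Let (x_k) solve the difference equation whose characteristic polynomial has distinct real roots λ_1,…,λ_n all satisfying ρ ≤ λ_i ≤ 1 (ρ > 0), with initial conditions x_0 = ⋯ = x_{n-2} = 0, x_{n-1} = 1. Then x_k ≥ C(k, n-1) ρ^{k-n+1} for all k ≥ n. -/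
/-!
Factor the characteristic polynomial as `(X - λ₁) Q`. Then `y k = x (k + 1) - λ₁ x k` solves the
recurrence of `Q`, with the same kind of initial conditions one index earlier, so by induction on
the degree `y k ≥ C(k, n - 2) ρ^(k - n + 2)`. Since `x (k + 1) = λ₁ x k + y k ≥ ρ x k + y k`, a
second induction on `k` and Pascal's rule give `x k ≥ C(k, n - 1) ρ^(k - n + 1)`.
-/

open Polynomial

section

variable {R : Type*} [CommSemiring R]

def seqShift : (ℕ → R) →ₗ[R] (ℕ → R) := LinearMap.funLeft R R Nat.succ

@[simp]
theorem seqShift_apply (x : ℕ → R) (k : ℕ) : seqShift x k = x (k + 1) := rfl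

theorem seqShift_pow_apply (j : ℕ) (x : ℕ → R) (k : ℕ) : (seqShift ^ j) x k = x (k + j) := by
  induction j generalizing x with
  | zero => rfl
  | succ j ih => rw [pow_succ, Module.End.mul_apply, ih]; rfl

theorem aeval_seqShift_apply {P : R[X]} {n : ℕ} (hP : P.natDegree ≤ n) (x : ℕ → R) (k : ℕ) :
    aeval seqShift P x k = ∑ j ∈ Finset.range (n + 1), P.coeff j * x (k + j) := by
  simp [aeval_eq_sum_range' (Nat.lt_succ_of_le hP), seqShift_pow_apply]

end

section

variable {R : Type*} [CommRing R]

theorem aeval_seqShift_X_sub_C_apply (a : R) (x : ℕ → R) (k : ℕ) :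
    aeval seqShift (X - C a) x k = x (k + 1) - a * x k := by
  simp

theorem natDegree_prod_X_sub_C_le {n : ℕ} (L : Fin n → R) :
    (∏ i, (X - C (L i))).natDegree ≤ n :=
  (natDegree_prod_le _ _).trans <|
    (Finset.sum_le_sum fun i _ => natDegree_X_sub_C_le (L i)).trans (by simp)

end

theorem choose_succ_mul_pow_le {ρ a : ℝ} {m : ℕ} {x : ℕ → ℝ} (hρ : 0 < ρ) (ha : ρ ≤ a)
    (h0 : x 0 = 0) (hy : ∀ k, (k.choose m : ℝ) * ρ ^ k ≤ ρ ^ m * (x (k + 1) - a * x k)) :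
    ∀ k, (k.choose (m + 1) : ℝ) * ρ ^ k ≤ ρ ^ (m + 1) * x k := by
  intro k
  induction k with
  | zero => simp [h0]
  | succ k ih =>
    have hx : 0 ≤ ρ ^ (m + 1) * x k := le_trans (by positivity) ih
    have hax : ρ * (ρ ^ (m + 1) * x k) ≤ a * (ρ ^ (m + 1) * x k) :=
      mul_le_mul_of_nonneg_right ha hx
    have hyk := mul_le_mul_of_nonneg_left (hy k) hρ.le
    have hik := mul_le_mul_of_nonneg_left ih hρ.le
    rw [Nat.choose_succ_succ, Nat.cast_add, pow_succ', pow_succ']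
    rw [pow_succ'] at hx hax hik
    linarith

/-- Multiplied through by `ρ ^ m` to avoid the truncated exponent `k - m`. -/
theorem choose_mul_pow_le_of_aeval_prod_X_sub_C {ρ : ℝ} (hρ : 0 < ρ) (m : ℕ)
    (L : Fin (m + 1) → ℝ) (hL : ∀ i, ρ ≤ L i) (x : ℕ → ℝ)
    (hx : aeval seqShift (∏ i, (X - C (L i))) x = 0)
    (h0 : ∀ i < m, x i = 0) (h1 : x m = 1) (k : ℕ) :
    (k.choose m : ℝ) * ρ ^ k ≤ ρ ^ m * x k := by
  induction m generalizing x k with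
  | zero =>
    have hgeom : ∀ k, x k = L 0 ^ k := fun k => by
      induction k with
      | zero => exact h1
      | succ k ih =>
        have := congrFun hx k
        rw [Fin.prod_univ_one, aeval_seqShift_X_sub_C_apply, Pi.zero_apply] at this
        rw [pow_succ, ← ih]
        linarith
    simpa [hgeom] using pow_le_pow_left₀ hρ.le (hL 0) k
  | succ m ih =>
    set y := aeval seqShift (X - C (L 0)) x with hy_def
    have hy : aeval seqShift (∏ i : Fin (m + 1), (X - C (L i.succ))) y = 0 := by
      rwa [Fin.prod_univ_succ, mul_comm, map_mul, Module.End.mul_apply] at hx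
    have hy0 : ∀ i < m, y i = 0 := fun i hi => by
      rw [hy_def, aeval_seqShift_X_sub_C_apply, h0 i (by omega), h0 (i + 1) (by omega)]; ring
    have hy1 : y m = 1 := by
      rw [hy_def, aeval_seqShift_X_sub_C_apply, h0 m (by omega), h1]; ring
    refine choose_succ_mul_pow_le hρ (hL 0) (h0 0 (by omega)) (fun k => ?_) k
    rw [← aeval_seqShift_X_sub_C_apply]
    exact ih (fun i => L i.succ) (fun i => hL i.succ) y hy hy0 hy1 k

theorem stmt14_general (n : ℕ) (hn : 1 ≤ n) (ρ : ℝ) (hρ : 0 < ρ) (L : Fin n → ℝ)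
    (hL : ∀ i, ρ ≤ L i ∧ L i ≤ 1) (x : ℕ → ℝ)
    (hrec : ∀ k : ℕ,
      ∑ j ∈ Finset.range (n + 1),
        (∏ i, (Polynomial.X - Polynomial.C (L i))).coeff j * x (k + j) = 0)
    (hinit0 : ∀ i : ℕ, i < n - 1 → x i = 0) (hinit1 : x (n - 1) = 1) :
    ∀ k : ℕ, n ≤ k → x k ≥ (k.choose (n - 1) : ℝ) * ρ ^ (k + 1 - n) := by
  intro k hk
  obtain ⟨m, rfl⟩ : ∃ m, n = m + 1 := ⟨n - 1, by omega⟩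
  have hx : aeval seqShift (∏ i, (X - C (L i))) x = 0 :=
    funext fun k => by rw [aeval_seqShift_apply (natDegree_prod_X_sub_C_le L)]; exact hrec k
  have key := choose_mul_pow_le_of_aeval_prod_X_sub_C hρ m L (fun i => (hL i).1) x hx
    hinit0 hinit1 k
  rw [show ρ ^ k = ρ ^ m * ρ ^ (k + 1 - (m + 1)) by rw [← pow_add]; congr 1; omega,
    mul_left_comm] at key
  exact le_of_mul_le_mul_left key (by positivity)

/-- Lower bound: distinct real roots in [ρ,1], ρ > 0, initial conditions (0,…,0,1)
    imply x_k ≥ C(k,n-1) ρ^{k-n+1}. -/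
theorem stmt14 (n : ℕ) (hn : 1 ≤ n) (ρ : ℝ) (hρ : 0 < ρ) (L : Fin n → ℝ)
    (hinj : Function.Injective L) (hL : ∀ i, ρ ≤ L i ∧ L i ≤ 1) (x : ℕ → ℝ)
    (hrec : ∀ k : ℕ,
      ∑ j ∈ Finset.range (n + 1),
        (∏ i, (Polynomial.X - Polynomial.C (L i))).coeff j * x (k + j) = 0)
    (hinit0 : ∀ i : ℕ, i < n - 1 → x i = 0) (hinit1 : x (n - 1) = 1) :
    ∀ k : ℕ, n ≤ k → x k ≥ (k.choose (n - 1) : ℝ) * ρ ^ (k + 1 - n) :=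
  stmt14_general n hn ρ hρ L hL x hrec hinit0 hinit1
end

section
/- Consider the noisy difference equation x_k - C(n,1)ρ x_{k-1} + ⋯ + (-1)^n ρ^n x_{k-n} = v_k for k ≥ n with |v_k| ≤ ε, all characteristic roots equal to ρ ∈ (0,1), and ‖(x_0,…,x_{n-1})‖_∞ ≤ 1. Then for every t ≥ n, x_t ≤ α_{t,n} + ε Σ_{k=n}^{t} C(t-k+n-1, n-1) ρ^{t-k} < α_n + ε(1-ρ)^{-n}, where α_{t,n} = Σ_{i=0}^{n-1} |P_i(t)| ρ^{t-i} and α_n = max_{k≥n} α_{k,n}. -/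
/-!
In generating-function terms the recurrence says that `(1 - ρX)^n · Σ x_t X^t` has coefficient
`v_m` in every degree `m ≥ n`. A solution is determined by `x_0, …, x_{n-1}`, so `x` is the sum
of a homogeneous solution with these initial values and of a solution with zero initial values
driven by `v`. The first is `ρ^t p(t)` with `p` the interpolant of `x_i ρ^{-i}` at the nodes
`0, …, n-1`; it is annihilated because the `n`-th forward difference of a polynomial of degree
`< n` vanishes. The second is the convolution of `v` with the coefficients `C(d+n-1, n-1) ρ^d` of
`(1 - ρX)^{-n}`. Termwise bounds give the first inequality, and the second holds because the
partial sums of `Σ_d C(d+n-1, n-1) ρ^d` stay strictly below `(1 - ρ)^{-n}`.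
-/

open Finset PowerSeries

section CommRing

variable {R : Type*} [CommRing R]

/-- `((1 - ρ S)^n f)(k + n)` for the backward shift `S`: the recurrence all of whose
characteristic roots equal `ρ` reads `autoregOp n ρ x k = v (k + n)`. -/
def autoregOp (n : ℕ) (ρ : R) (f : ℕ → R) (k : ℕ) : R :=
  ∑ j ∈ range (n + 1), (-1 : R) ^ j * (n.choose j) * ρ ^ j * f (k + n - j)

lemma autoregOp_add (n : ℕ) (ρ : R) (f g : ℕ → R) (k : ℕ) :
    autoregOp n ρ (f + g) k = autoregOp n ρ f k + autoregOp n ρ g k := by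
  simp only [autoregOp, Pi.add_apply, mul_add, sum_add_distrib]

lemma eq_of_autoregOp_eq {n : ℕ} {ρ : R} {f g : ℕ → R}
    (h : ∀ k, autoregOp n ρ f k = autoregOp n ρ g k) (hinit : ∀ i < n, f i = g i) :
    f = g := by
  funext t
  induction t using Nat.strong_induction_on with
  | _ t ih =>
    rcases lt_or_ge t n with ht | ht
    · exact hinit t ht
    obtain ⟨k, rfl⟩ := Nat.exists_eq_add_of_le' ht
    have hk := h k
    simp only [autoregOp, sum_range_succ' _ n] at hk
    rw [sum_congr rfl fun j hj => by rw [ih _ (by have := mem_range.1 hj; omega)]] at hk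
    simpa using hk

lemma autoregOp_pow_mul_eval {n : ℕ} (ρ : R) {p : Polynomial R} (hp : p.degree < n) (k : ℕ) :
    autoregOp n ρ (fun t => ρ ^ t * p.eval (t : R)) k = 0 := by
  rcases eq_or_ne p 0 with rfl | hp0
  · simp [autoregOp]
  have hΔ := congr_fun (Polynomial.fwdDiff_iter_eq_zero_of_degree_lt
    ((Polynomial.natDegree_lt_iff_degree_lt hp0).2 hp)) (k : R)
  rw [fwdDiff_iter_eq_sum_shift] at hΔ
  calc autoregOp n ρ (fun t => ρ ^ t * p.eval (t : R)) k
      = ρ ^ (k + n) * ∑ i ∈ range (n + 1),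
          ((-1 : ℤ) ^ (n - i) * n.choose i) • p.eval ((k : R) + i • 1) := by
        rw [autoregOp, ← sum_range_reflect, mul_sum]
        refine sum_congr rfl fun i hi => ?_
        have hi : i ≤ n := Nat.lt_succ_iff.1 (mem_range.1 hi)
        have hpow : ρ ^ (n - i) * ρ ^ (k + i) = ρ ^ (k + n) := by
          rw [← pow_add]; congr 1; omega
        rw [add_tsub_cancel_right, Nat.choose_symm hi, zsmul_eq_mul,
          show k + n - (n - i) = k + i by omega]
        push_cast [nsmul_eq_mul, mul_one]
        linear_combination (-1 : R) ^ (n - i) * n.choose i * p.eval ((k : R) + i) * hpow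
    _ = 0 := by rw [hΔ, Pi.zero_apply, mul_zero]

lemma coeff_one_sub_C_mul_X_pow (n i : ℕ) (ρ : R) :
    coeff i ((1 - C ρ * X : R⟦X⟧) ^ n) = (-1) ^ i * n.choose i * ρ ^ i := by
  have h : (1 - C ρ * X : R⟦X⟧) ^ n =
      rescale (-ρ) (((1 + Polynomial.X) ^ n : Polynomial R) : R⟦X⟧) := by
    simp [rescale_X, sub_eq_add_neg]
  rw [h, coeff_rescale, Polynomial.coeff_coe, Polynomial.coeff_one_add_X_pow, neg_pow]
  ring

lemma autoregOp_eq_coeff (n : ℕ) (ρ : R) (f : ℕ → R) (k : ℕ) :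
    autoregOp n ρ f k = coeff (k + n) ((1 - C ρ * X) ^ n * PowerSeries.mk f) := by
  rw [coeff_mul, Nat.sum_antidiagonal_eq_sum_range_succ_mk, autoregOp]
  simp only [coeff_one_sub_C_mul_X_pow, coeff_mk]
  -- the coefficients of `(1 - ρX)^n` beyond degree `n` vanish
  refine sum_subset (range_subset_range.2 (by omega)) fun j _ hj => ?_
  rw [Nat.choose_eq_zero_of_lt (by simpa using hj)]
  simp

/-- The coefficients of `(1 - ρX)^{-n}`. -/
def impulseResponse (n : ℕ) (ρ : R) (d : ℕ) : R :=
  ((d + n - 1).choose (n - 1) : R) * ρ ^ d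

lemma one_sub_C_mul_X_pow_mul_mk_impulseResponse {n : ℕ} (hn : 0 < n) (ρ : R) :
    (1 - C ρ * X) ^ n * PowerSeries.mk (impulseResponse n ρ) = 1 := by
  have h : PowerSeries.mk (impulseResponse n ρ) = rescale ρ (invOneSubPow R n).val := by
    rw [invOneSubPow_val_eq_mk_sub_one_add_choose_of_pos R n hn, rescale_mk]
    ext d
    rw [coeff_mk, coeff_mk, impulseResponse, mul_comm, show d + n - 1 = n - 1 + d by omega]
  have h1 : (1 - C ρ * X : R⟦X⟧) ^ n = rescale ρ (invOneSubPow R n).inv := by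
    rw [invOneSubPow_inv_eq_one_sub_pow, map_pow, map_sub, map_one, rescale_X]
  rw [h, h1, ← map_mul, Units.inv_val, map_one]

def particularSol (n : ℕ) (ρ : R) (v : ℕ → R) (t : ℕ) : R :=
  ∑ m ∈ Icc n t, v m * impulseResponse n ρ (t - m)

lemma particularSol_of_lt {n t : ℕ} (ρ : R) (v : ℕ → R) (ht : t < n) :
    particularSol n ρ v t = 0 := by
  simp [particularSol, Icc_eq_empty_of_lt ht]

lemma autoregOp_particularSol {n : ℕ} (hn : 0 < n) (ρ : R) (v : ℕ → R) (k : ℕ) :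
    autoregOp n ρ (particularSol n ρ v) k = v (k + n) := by
  have hmk : PowerSeries.mk (particularSol n ρ v) =
      PowerSeries.mk (fun m => if n ≤ m then v m else 0) *
        PowerSeries.mk (impulseResponse n ρ) := by
    ext t
    rw [coeff_mul, Nat.sum_antidiagonal_eq_sum_range_succ_mk, coeff_mk, particularSol]
    simp only [coeff_mk, ite_mul, zero_mul, ← sum_filter]
    congr 1
    ext m
    simp [and_comm]
  rw [autoregOp_eq_coeff, hmk, mul_left_comm, one_sub_C_mul_X_pow_mul_mk_impulseResponse hn,
    mul_one, coeff_mk, if_pos (Nat.le_add_left n k)]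

end CommRing

section Homogeneous

variable {F : Type*} [Field F] [CharZero F]

/-- The paper's `Σ_i x_i P_i(t) ρ^(t-i)` (see `homogeneousSol_eq_sum`), written as `ρ^t` times
the interpolant of the values `x_i ρ^{-i}`. -/
noncomputable def homogeneousSol (n : ℕ) (ρ : F) (x : ℕ → F) (t : ℕ) : F :=
  ρ ^ t *
    (Lagrange.interpolate (range n) (fun i : ℕ => (i : F)) (fun i => x i / ρ ^ i)).eval (t : F)

lemma natCast_injOn_range (n : ℕ) : Set.InjOn (fun i : ℕ => (i : F)) (range n) :=
  Nat.cast_injective.injOn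

lemma homogeneousSol_of_lt {n i : ℕ} {ρ : F} (hρ : ρ ≠ 0) (x : ℕ → F) (hi : i < n) :
    homogeneousSol n ρ x i = x i := by
  rw [homogeneousSol, Lagrange.eval_interpolate_at_node _ (natCast_injOn_range n) (mem_range.2 hi),
    mul_div_cancel₀ _ (pow_ne_zero i hρ)]

lemma autoregOp_homogeneousSol (n : ℕ) (ρ : F) (x : ℕ → F) (k : ℕ) :
    autoregOp n ρ (homogeneousSol n ρ x) k = 0 :=
  autoregOp_pow_mul_eval ρ
    (by simpa using Lagrange.degree_interpolate_lt _ (natCast_injOn_range n)) k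

lemma eq_homogeneousSol_add_particularSol {n : ℕ} (hn : 0 < n) {ρ : F} (hρ : ρ ≠ 0)
    {x v : ℕ → F} (hrec : ∀ k, autoregOp n ρ x k = v (k + n)) :
    x = homogeneousSol n ρ x + particularSol n ρ v :=
  eq_of_autoregOp_eq
    (fun k => by
      rw [autoregOp_add, autoregOp_homogeneousSol, autoregOp_particularSol hn, zero_add, hrec])
    (fun i hi => by
      rw [Pi.add_apply, homogeneousSol_of_lt hρ x hi, particularSol_of_lt ρ v hi, add_zero])

end Homogeneous

lemma lagrangeP_eq_eval_basis (n i k : ℕ) :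
    lagrangeP n i k = (Lagrange.basis (range n) (fun j : ℕ => (j : ℝ)) i).eval (k : ℝ) := by
  rw [lagrangeP, Lagrange.basis, Polynomial.eval_prod]
  refine prod_congr rfl fun j _ => ?_
  rw [Lagrange.basisDivisor, Polynomial.eval_mul, Polynomial.eval_C, Polynomial.eval_sub,
    Polynomial.eval_X, Polynomial.eval_C, div_eq_mul_inv, mul_comm]

lemma homogeneousSol_eq_sum {n t : ℕ} {ρ : ℝ} (hρ : ρ ≠ 0) (x : ℕ → ℝ) (ht : n ≤ t) :
    homogeneousSol n ρ x t = ∑ i ∈ range n, x i * lagrangeP n i t * ρ ^ (t - i) := by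
  rw [homogeneousSol, Lagrange.interpolate_apply, Polynomial.eval_finsetSum, mul_sum]
  refine sum_congr rfl fun i hi => ?_
  rw [Polynomial.eval_mul, Polynomial.eval_C, lagrangeP_eq_eval_basis,
    pow_sub₀ ρ hρ (by have := mem_range.1 hi; omega)]
  field_simp

lemma homogeneousSol_le {n t : ℕ} {ρ : ℝ} (hρ : 0 < ρ) {x : ℕ → ℝ}
    (hinit : ∀ i < n, |x i| ≤ 1) (ht : n ≤ t) :
    homogeneousSol n ρ x t ≤ ∑ i ∈ range n, |lagrangeP n i t| * ρ ^ (t - i) := by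
  rw [homogeneousSol_eq_sum hρ.ne' x ht]
  refine sum_le_sum fun i hi => mul_le_mul_of_nonneg_right ?_ (pow_nonneg hρ.le _)
  calc x i * lagrangeP n i t ≤ |x i| * |lagrangeP n i t| := by
        rw [← abs_mul]; exact le_abs_self _
    _ ≤ |lagrangeP n i t| := mul_le_of_le_one_left (abs_nonneg _) (hinit i (mem_range.1 hi))

lemma particularSol_le {n t : ℕ} {ρ ε : ℝ} (hρ : 0 ≤ ρ) {v : ℕ → ℝ}
    (hv : ∀ k, n ≤ k → |v k| ≤ ε) :
    particularSol n ρ v t ≤ ε * ∑ k ∈ Icc n t, impulseResponse n ρ (t - k) := by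
  rw [particularSol, mul_sum]
  refine sum_le_sum fun k hk => mul_le_mul_of_nonneg_right ?_ ?_
  · exact (le_abs_self _).trans (hv k (mem_Icc.1 hk).1)
  · unfold impulseResponse; positivity

lemma sum_Icc_impulseResponse_lt {n : ℕ} (hn : 0 < n) {ρ : ℝ} (hρ0 : 0 < ρ) (hρ1 : ρ < 1)
    (t : ℕ) : ∑ k ∈ Icc n t, impulseResponse n ρ (t - k) < ((1 - ρ) ^ n)⁻¹ := by
  have hsum : HasSum (impulseResponse n ρ) ((1 - ρ) ^ n)⁻¹ := by
    have hρ : ‖ρ‖ < 1 := by rw [Real.norm_eq_abs, abs_lt]; constructor <;> linarith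
    have hfun : impulseResponse n ρ = fun d => ((d + (n - 1)).choose (n - 1) : ℝ) * ρ ^ d := by
      ext d; rw [impulseResponse, Nat.add_sub_assoc hn]
    simpa [hfun, Nat.sub_add_cancel hn] using hasSum_choose_mul_geometric_of_norm_lt_one (n - 1) hρ
  have hpos : 0 < impulseResponse n ρ (t + 1 - n) :=
    mul_pos (Nat.cast_pos.2 (Nat.choose_pos (by omega))) (pow_pos hρ0 _)
  calc ∑ k ∈ Icc n t, impulseResponse n ρ (t - k)
      = ∑ d ∈ range (t + 1 - n), impulseResponse n ρ d := by
        rw [← Ico_add_one_right_eq_Icc, sum_Ico_reflect _ n le_rfl, Nat.sub_self, range_eq_Ico]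
    _ < ∑ d ∈ range (t + 1 - n + 1), impulseResponse n ρ d := by
        rw [sum_range_succ]; exact lt_add_of_pos_right _ hpos
    _ ≤ ((1 - ρ) ^ n)⁻¹ := sum_le_hasSum _ (fun d _ => by unfold impulseResponse; positivity) hsum

theorem stmt17_general (n : ℕ) (hn : 1 ≤ n) (ρ ε : ℝ) (hρ0 : 0 < ρ) (hρ1 : ρ < 1) (hε : 0 < ε)
    (x v : ℕ → ℝ) (hv : ∀ k : ℕ, n ≤ k → |v k| ≤ ε)
    (hrec : ∀ k : ℕ,
      ∑ j ∈ Finset.range (n + 1), (-1 : ℝ) ^ j * (n.choose j) * ρ ^ j * x (k + n - j)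
        = v (k + n))
    (hinit : ∀ i : ℕ, i < n → |x i| ≤ 1)
    (A : ℝ)
    (hA1 : ∀ k : ℕ, n ≤ k → ∑ i ∈ Finset.range n, |lagrangeP n i k| * ρ ^ (k - i) ≤ A) :
    ∀ t : ℕ, n ≤ t →
      x t ≤ (∑ i ∈ Finset.range n, |lagrangeP n i t| * ρ ^ (t - i))
              + ε * ∑ k ∈ Finset.Icc n t, ((t - k + n - 1).choose (n - 1) : ℝ) * ρ ^ (t - k) ∧
      (∑ i ∈ Finset.range n, |lagrangeP n i t| * ρ ^ (t - i))
          + ε * ∑ k ∈ Finset.Icc n t, ((t - k + n - 1).choose (n - 1) : ℝ) * ρ ^ (t - k)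
        < A + ε * ((1 - ρ) ^ n)⁻¹ := by
  have hx : x = homogeneousSol n ρ x + particularSol n ρ v :=
    eq_homogeneousSol_add_particularSol hn hρ0.ne' hrec
  intro t ht
  refine ⟨?_, ?_⟩
  · calc x t = homogeneousSol n ρ x t + particularSol n ρ v t := congr_fun hx t
      _ ≤ _ := add_le_add (homogeneousSol_le hρ0 hinit ht) (particularSol_le hρ0.le hv)
  · have hS := mul_lt_mul_of_pos_left (sum_Icc_impulseResponse_lt hn hρ0 hρ1 t) hε
    unfold impulseResponse at hS
    linarith [hA1 t ht]

/-- Bounded-noise autoregression with all characteristic roots equal to ρ: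
    upper bounds on the solution. -/
theorem stmt17 (n : ℕ) (hn : 1 ≤ n) (ρ ε : ℝ) (hρ0 : 0 < ρ) (hρ1 : ρ < 1) (hε : 0 < ε)
    (x v : ℕ → ℝ) (hv : ∀ k : ℕ, n ≤ k → |v k| ≤ ε)
    (hrec : ∀ k : ℕ,
      ∑ j ∈ Finset.range (n + 1), (-1 : ℝ) ^ j * (n.choose j) * ρ ^ j * x (k + n - j)
        = v (k + n))
    (hinit : ∀ i : ℕ, i < n → |x i| ≤ 1)
    (A : ℝ)
    (hA1 : ∀ k : ℕ, n ≤ k → ∑ i ∈ Finset.range n, |lagrangeP n i k| * ρ ^ (k - i) ≤ A)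
    (hA2 : ∃ k : ℕ, n ≤ k ∧ ∑ i ∈ Finset.range n, |lagrangeP n i k| * ρ ^ (k - i) = A) :
    ∀ t : ℕ, n ≤ t →
      x t ≤ (∑ i ∈ Finset.range n, |lagrangeP n i t| * ρ ^ (t - i))
              + ε * ∑ k ∈ Finset.Icc n t, ((t - k + n - 1).choose (n - 1) : ℝ) * ρ ^ (t - k) ∧
      (∑ i ∈ Finset.range n, |lagrangeP n i t| * ρ ^ (t - i))
          + ε * ∑ k ∈ Finset.Icc n t, ((t - k + n - 1).choose (n - 1) : ℝ) * ρ ^ (t - k)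
        < A + ε * ((1 - ρ) ^ n)⁻¹ :=
  stmt17_general n hn ρ ε hρ0 hρ1 hε x v hv hrec hinit A hA1
end
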